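/- Let p, q ∈ [0,1], and over the complex 2×2 matrices define X = !![0,1;1,0], Y = !![0,-i;i,0], Z = !![1,0;0,-1], D₀ = √(1-p)·I₂, D₁ = √p·X, E₀ = √(1-q)·I₂, E₁ = √q·Z, the rank-one projectors P₀ = |0⟩⟨0|, P₁ = |1⟩⟨1| onto the standard basis states, and P₊ = |+⟩⟨+|, P₋ = |−⟩⟨−| with |±⟩ = (|0⟩±|1⟩)/√2. For i,j ∈ {0,1} define the 4×4 Kraus operators W_{ij} = (D_i E_j) ⊗ P₀ + (E_j D_i) ⊗ P₁ (Kronecker product). Then for every complex 2×2 matrix ρ: Σ_{i,j∈{0,1}} W_{ij} (ρ ⊗ P₊) W_{ij}† = ((1-p)(1-q)·ρ + p(1-q)·XρX + (1-p)q·ZρZ) ⊗ P₊ + pq·(YρY) ⊗ P₋. -/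

import Mathlib

open Matrix Kronecker

noncomputable section

/-- Pauli X. -/
def PX : Matrix (Fin 2) (Fin 2) ℂ := !![0, 1; 1, 0]

/-- Pauli Y. -/
def PY : Matrix (Fin 2) (Fin 2) ℂ := !![0, -Complex.I; Complex.I, 0]

/-- Pauli Z. -/
def PZ : Matrix (Fin 2) (Fin 2) ℂ := !![1, 0; 0, -1]

/-- Kraus operators of the bit-flip channel: `D₀ = √(1-p)·I₂`, `D₁ = √p·X`. -/
def Dk (p : ℝ) : Fin 2 → Matrix (Fin 2) (Fin 2) ℂ :=
  ![((Real.sqrt (1 - p) : ℝ) : ℂ) • (1 : Matrix (Fin 2) (Fin 2) ℂ),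
    ((Real.sqrt p : ℝ) : ℂ) • PX]

/-- Kraus operators of the phase-flip channel: `E₀ = √(1-q)·I₂`, `E₁ = √q·Z`. -/
def Ek (q : ℝ) : Fin 2 → Matrix (Fin 2) (Fin 2) ℂ :=
  ![((Real.sqrt (1 - q) : ℝ) : ℂ) • (1 : Matrix (Fin 2) (Fin 2) ℂ),
    ((Real.sqrt q : ℝ) : ℂ) • PZ]

/-- `P₀ = |0⟩⟨0|`. -/
def P0 : Matrix (Fin 2) (Fin 2) ℂ := !![1, 0; 0, 0]

/-- `P₁ = |1⟩⟨1|`. -/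
def P1 : Matrix (Fin 2) (Fin 2) ℂ := !![0, 0; 0, 1]

/-- `P₊ = |+⟩⟨+|` with `|+⟩ = (|0⟩+|1⟩)/√2`. -/
def Pplus : Matrix (Fin 2) (Fin 2) ℂ := !![1/2, 1/2; 1/2, 1/2]

/-- `P₋ = |−⟩⟨−|` with `|−⟩ = (|0⟩−|1⟩)/√2`. -/
def Pminus : Matrix (Fin 2) (Fin 2) ℂ := !![1/2, -(1/2); -(1/2), 1/2]

/-- Kraus operators of the quantum switch:
`W_{ij} = (D_i E_j) ⊗ P₀ + (E_j D_i) ⊗ P₁`. -/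
def W (p q : ℝ) (i j : Fin 2) : Matrix (Fin 2 × Fin 2) (Fin 2 × Fin 2) ℂ :=
  (Dk p i * Ek q j) ⊗ₖ P0 + (Ek q j * Dk p i) ⊗ₖ P1

/-!
The Kraus operators of the two channels commute, except `D₁ = √p X` and `E₁ = √q Z`, which
anticommute. Hence `W_{ij} = D_i E_j ⊗ (P₀ + P₁) = D_i E_j ⊗ I` for `(i, j) ≠ (1, 1)`, while
`W₁₁ = D₁ E₁ ⊗ (P₀ - P₁) = D₁ E₁ ⊗ Z`, and conjugation by `Z` turns the control state `P₊` into
`P₋`. On the target, `XZ = -iY`, so `XZ ρ (XZ)† = Y ρ Y`.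
-/

section Sandwich

variable {l m n o : Type*} [Fintype m] [Fintype n]

theorem kronecker_mul_kronecker_mul_conjTranspose {R : Type*} [CommRing R] [StarRing R]
    (A : Matrix l m R) (B : Matrix o n R) (ρ : Matrix m m R) (σ : Matrix n n R) :
    (A ⊗ₖ B) * (ρ ⊗ₖ σ) * (A ⊗ₖ B)ᴴ = (A * ρ * Aᴴ) ⊗ₖ (B * σ * Bᴴ) := by
  rw [conjTranspose_kronecker, mul_kronecker_mul, mul_kronecker_mul]

theorem smul_mul_mul_conjTranspose_smul {R : Type*} [CommRing R] [StarRing R]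
    (c : R) (A : Matrix l m R) (ρ : Matrix m m R) :
    (c • A) * ρ * (c • A)ᴴ = (c * star c) • (A * ρ * Aᴴ) := by
  rw [conjTranspose_smul, Matrix.smul_mul, Matrix.smul_mul, Matrix.mul_smul, smul_smul]

theorem sqrt_smul_mul_sqrt_smul_mul_mul_conjTranspose {a b : ℝ} (ha : 0 ≤ a) (hb : 0 ≤ b)
    (A : Matrix l m ℂ) (B : Matrix m n ℂ) (ρ : Matrix n n ℂ) :
    ((√a : ℂ) • A * (√b : ℂ) • B) * ρ * ((√a : ℂ) • A * (√b : ℂ) • B)ᴴ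
      = ((a * b : ℝ) : ℂ) • (A * B * ρ * (A * B)ᴴ) := by
  have hab : (√a * √b) * (√a * √b) = a * b := by
    rw [mul_mul_mul_comm, Real.mul_self_sqrt ha, Real.mul_self_sqrt hb]
  rw [Matrix.smul_mul, Matrix.mul_smul, smul_smul, smul_mul_mul_conjTranspose_smul,
    Complex.star_def, map_mul, Complex.conj_ofReal, Complex.conj_ofReal, ← hab]
  push_cast
  rfl

end Sandwich

theorem PX_conjTranspose : PXᴴ = PX := by
  ext i j; fin_cases i <;> fin_cases j <;> simp [PX]

theorem PZ_conjTranspose : PZᴴ = PZ := by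
  ext i j; fin_cases i <;> fin_cases j <;> simp [PZ]

theorem PZ_mul_PX : PZ * PX = -(PX * PZ) := by
  ext i j; fin_cases i <;> fin_cases j <;> simp [PX, PZ]

theorem PY_conjTranspose : PYᴴ = PY := by
  ext i j; fin_cases i <;> fin_cases j <;> simp [PY]

theorem PY_eq_I_smul_PX_mul_PZ : PY = Complex.I • (PX * PZ) := by
  ext i j; fin_cases i <;> fin_cases j <;> simp [PX, PY, PZ]

theorem PX_mul_PZ_mul_mul_conjTranspose (ρ : Matrix (Fin 2) (Fin 2) ℂ) :
    PX * PZ * ρ * (PX * PZ)ᴴ = PY * ρ * PY := by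
  nth_rewrite 2 [← PY_conjTranspose]
  rw [PY_eq_I_smul_PX_mul_PZ, smul_mul_mul_conjTranspose_smul, Complex.star_def, Complex.conj_I,
    mul_neg, Complex.I_mul_I, neg_neg, one_smul]

theorem P0_add_P1 : P0 + P1 = 1 := by
  ext i j; fin_cases i <;> fin_cases j <;> simp [P0, P1]

theorem P0_sub_P1 : P0 - P1 = PZ := by
  ext i j; fin_cases i <;> fin_cases j <;> simp [P0, P1, PZ]

theorem PZ_mul_Pplus_mul_PZ : PZ * Pplus * PZ = Pminus := by
  ext i j; fin_cases i <;> fin_cases j <;> simp [PZ, Pplus, Pminus, Matrix.mul_apply]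

theorem Dk_zero (p : ℝ) : Dk p 0 = (√(1 - p) : ℂ) • 1 := rfl

theorem Dk_one (p : ℝ) : Dk p 1 = (√p : ℂ) • PX := rfl

theorem Ek_zero (q : ℝ) : Ek q 0 = (√(1 - q) : ℂ) • 1 := rfl

theorem Ek_one (q : ℝ) : Ek q 1 = (√q : ℂ) • PZ := rfl

theorem W_eq_kronecker_one {p q : ℝ} {i j : Fin 2} (h : Commute (Dk p i) (Ek q j)) :
    W p q i j = (Dk p i * Ek q j) ⊗ₖ 1 := by
  rw [W, ← h.eq, ← kronecker_add, P0_add_P1]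

theorem W_eq_kronecker_PZ {p q : ℝ} {i j : Fin 2} (h : Ek q j * Dk p i = -(Dk p i * Ek q j)) :
    W p q i j = (Dk p i * Ek q j) ⊗ₖ PZ := by
  rw [W, h, ← neg_one_smul ℂ (Dk p i * Ek q j), smul_kronecker, ← kronecker_smul,
    ← kronecker_add, neg_one_smul, ← sub_eq_add_neg, P0_sub_P1]

theorem Ek_one_mul_Dk_one (p q : ℝ) : Ek q 1 * Dk p 1 = -(Dk p 1 * Ek q 1) := by
  rw [Ek_one, Dk_one, smul_mul_smul_comm, smul_mul_smul_comm, PZ_mul_PX, smul_neg, mul_comm]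

theorem quantum_switch_action (p q : ℝ) (hp : p ∈ Set.Icc (0:ℝ) 1)
    (hq : q ∈ Set.Icc (0:ℝ) 1) (ρ : Matrix (Fin 2) (Fin 2) ℂ) :
    ∑ i : Fin 2, ∑ j : Fin 2, W p q i j * (ρ ⊗ₖ Pplus) * (W p q i j)ᴴ =
      ((((1 - p) * (1 - q) : ℝ) : ℂ) • ρ + ((p * (1 - q) : ℝ) : ℂ) • (PX * ρ * PX) +
          (((1 - p) * q : ℝ) : ℂ) • (PZ * ρ * PZ)) ⊗ₖ Pplus +
        ((p * q : ℝ) : ℂ) • ((PY * ρ * PY) ⊗ₖ Pminus) := by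
  obtain ⟨hp0, hp1⟩ := hp
  obtain ⟨hq0, hq1⟩ := hq
  have hp1' : 0 ≤ 1 - p := sub_nonneg.2 hp1
  have hq1' : 0 ≤ 1 - q := sub_nonneg.2 hq1
  rw [Fin.sum_univ_two, Fin.sum_univ_two, Fin.sum_univ_two,
    W_eq_kronecker_one ((Commute.one_left _).smul_left _),
    W_eq_kronecker_one ((Commute.one_left _).smul_left _),
    W_eq_kronecker_one ((Commute.one_right _).smul_right _),
    W_eq_kronecker_PZ (Ek_one_mul_Dk_one p q)]
  simp only [kronecker_mul_kronecker_mul_conjTranspose, Dk_zero, Dk_one, Ek_zero, Ek_one,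
    sqrt_smul_mul_sqrt_smul_mul_mul_conjTranspose, hp0, hq0, hp1', hq1',
    PX_mul_PZ_mul_mul_conjTranspose, PX_conjTranspose, PZ_conjTranspose, PZ_mul_Pplus_mul_PZ,
    conjTranspose_one, mul_one, one_mul, smul_kronecker, add_kronecker]
  abel

end
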